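/- Let A be an Artin algebra and 0 → G → P → G' → 0 an exact sequence of finitely generated left A-modules where G is Gorenstein-projective, P is projective, and the map G → P is a left add(A)-approximation of G. Then G' is Gorenstein-projective. -/

import Mathlib

/-!
Realise `G` as `ker (d⁰ : T⁰ → T¹)` for a totally acyclic complex `T`, with inclusion `u : G → T⁰`.
Since `f` is a left `add A`-approximation there is `h : P → T⁰` with `h f = u`, and since `T` stays
exact under `Hom(-, Q)` for every finitely generated projective `Q`, there are `k : T⁰ → P` with
`k u = f` and `ξ : T¹ → T⁰` with `ξ d⁰ + h k = 1`. Splicing `P` into `T` along these maps gives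
`⋯ → T⁻² → T⁻¹ → P → T¹ ⊕ P → T² ⊕ T⁰ → T³ → T⁴ → ⋯`,
whose total acyclicity only uses the relation `ξ d⁰ + h k = 1`, and whose cocycle module in degree
`0` is `P / f(G) ≅ G'`.
-/

universe u
open CategoryTheory

section GP
variable (R : Type u) [Ring R]

/-- A module is Gorenstein-projective if it is (isomorphic to) a cocycle of a totally acyclic
complex of finitely generated projective modules, i.e. an acyclic complex of finitely generated
projectives which stays acyclic after applying `Hom(-, R)`. -/
def IsGorensteinProjective (G : Type u) [AddCommGroup G] [Module R G] : Prop :=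
  ∃ (P : ℤ → ModuleCat.{u} R) (d : ∀ n, P n ⟶ P (n + 1)),
    (∀ n, Module.Finite R (P n)) ∧ (∀ n, Module.Projective R (P n)) ∧
    (∀ n, LinearMap.range (d n).hom = LinearMap.ker (d (n + 1)).hom) ∧
    (∀ (n : ℤ) (g : P (n + 1) →ₗ[R] R), g.comp (d n).hom = 0 →
      ∃ h : P (n + 1 + 1) →ₗ[R] R, h.comp (d (n + 1)).hom = g) ∧
    Nonempty (G ≃ₗ[R] LinearMap.ker (d 0).hom)

/-- A module `M` is semi-Gorenstein-projective if `Ext^i(M, R) = 0` for all `i ≥ 1`. -/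
def IsSemiGP (M : Type u) [AddCommGroup M] [Module R M] : Prop :=
  ∀ i : ℕ, 1 ≤ i →
    Subsingleton (((Ext ℤ (ModuleCat.{u} R) i).obj
      (Opposite.op (ModuleCat.of R M))).obj (ModuleCat.of R R))

/-- A ring is left weakly Gorenstein if every finitely generated semi-Gorenstein-projective
left module is Gorenstein-projective. -/
def LeftWeaklyGorenstein : Prop :=
  ∀ (M : Type u) (_ : AddCommGroup M) (_ : Module R M), Module.Finite R M →
    IsSemiGP R M → IsGorensteinProjective R M

end GP

section Approx
variable (R : Type u) [Ring R] (M : Type u) [AddCommGroup M] [Module R M]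
variable (P : Type u) [AddCommGroup P] [Module R P]

/-- `f : M → P` is a left `add R`-approximation: `P` is a finitely generated projective
module (i.e. `P ∈ add R`), and every homomorphism from `M` to a finitely generated
projective module factors through `f`. -/
def IsLeftAddApprox (f : M →ₗ[R] P) : Prop :=
  Module.Finite R P ∧ Module.Projective R P ∧
  ∀ (Q : Type u) (_ : AddCommGroup Q) (_ : Module R Q), Module.Finite R Q →
    Module.Projective R Q → ∀ g : M →ₗ[R] Q, ∃ h : P →ₗ[R] Q, h.comp f = g
end Approx

open LinearMap

section

variable {A : Type*} [Ring A] {X Y Z W : Type*} [AddCommGroup X] [Module A X]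
  [AddCommGroup Y] [Module A Y] [AddCommGroup Z] [Module A Z] [AddCommGroup W] [Module A W]

structure TotallyExact (d : X →ₗ[A] Y) (e : Y →ₗ[A] Z) : Prop where
  range_eq_ker : range d = ker e
  exists_comp_eq : ∀ φ : Y →ₗ[A] A, φ ∘ₗ d = 0 → ∃ ψ : Z →ₗ[A] A, ψ ∘ₗ e = φ

namespace TotallyExact

variable {d : X →ₗ[A] Y} {e : Y →ₗ[A] Z}

theorem comp_eq_zero (hde : TotallyExact d e) : e ∘ₗ d = 0 :=
  range_le_ker_iff.1 hde.range_eq_ker.le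

theorem exists_comp_eq_of_projective (hde : TotallyExact d e)
    [Module.Finite A W] [Module.Projective A W] (φ : Y →ₗ[A] W) (hφ : φ ∘ₗ d = 0) :
    ∃ ψ : Z →ₗ[A] W, ψ ∘ₗ e = φ := by
  obtain ⟨n, p, s, -, -, hps⟩ := Module.Finite.exists_comp_eq_id_of_projective A W
  choose ψ hψ using fun i : Fin n ↦
    hde.exists_comp_eq (proj i ∘ₗ s ∘ₗ φ) (by rw [comp_assoc, comp_assoc, hφ, comp_zero, comp_zero])
  refine ⟨p ∘ₗ pi ψ, ?_⟩
  rw [comp_assoc, pi_comp, funext hψ, pi_proj_comp, ← comp_assoc, hps, id_comp]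

theorem comp_surjective (hde : TotallyExact d e) {p : W →ₗ[A] X} (hp : Function.Surjective p) :
    TotallyExact (d ∘ₗ p) e where
  range_eq_ker := by rw [range_comp_of_range_eq_top _ (range_eq_top.2 hp), hde.range_eq_ker]
  exists_comp_eq φ hφ :=
    hde.exists_comp_eq φ ((cancel_right hp).1 (by rw [comp_assoc, hφ, zero_comp]))

theorem comp_of_retraction (hde : TotallyExact d e) {k : Z →ₗ[A] W} {h : W →ₗ[A] Z}
    (hkh : h ∘ₗ k ∘ₗ e = e) : TotallyExact d (k ∘ₗ e) where
  range_eq_ker := by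
    refine hde.range_eq_ker.trans (le_antisymm (ker_le_ker_comp e k) fun y hy ↦ ?_)
    have hy : k (e y) = 0 := hy
    rw [mem_ker, ← hkh, LinearMap.comp_apply, LinearMap.comp_apply, hy, map_zero]
  exists_comp_eq φ hφ := by
    obtain ⟨χ, rfl⟩ := hde.exists_comp_eq φ hφ
    exact ⟨χ ∘ₗ h, by rw [comp_assoc, hkh]⟩

theorem exists_homotopy {V M : Type*} [AddCommGroup V] [Module A V] [AddCommGroup M] [Module A M]
    {b : V →ₗ[A] X} (hbd : TotallyExact b d) (hde : TotallyExact d e)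
    [Module.Finite A Y] [Module.Projective A Y] [Module.Finite A W] [Module.Projective A W]
    (ι : M ≃ₗ[A] ker e) (f : M →ₗ[A] W) {h : W →ₗ[A] Y} (hh : h ∘ₗ f = (ker e).subtype ∘ₗ ι) :
    ∃ (k : Y →ₗ[A] W) (ξ : Z →ₗ[A] Y),
      ξ ∘ₗ e + h ∘ₗ k = LinearMap.id ∧ range (k ∘ₗ d) = range f := by
  let π : X →ₗ[A] M :=
    ι.symm ∘ₗ (LinearEquiv.ofEq _ _ hde.range_eq_ker).toLinearMap ∘ₗ d.rangeRestrict
  have hπ : Function.Surjective π :=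
    ι.symm.surjective.comp ((LinearEquiv.ofEq _ _ hde.range_eq_ker).surjective.comp
      d.surjective_rangeRestrict)
  have hdπ : (ker e).subtype ∘ₗ ι ∘ₗ π = d := by ext; simp [π]
  have hπb : π ∘ₗ b = 0 := by
    ext v
    apply ι.injective
    apply Subtype.ext
    simpa [π] using LinearMap.congr_fun hbd.comp_eq_zero v
  obtain ⟨k, hk⟩ := hbd.exists_comp_eq_of_projective (f ∘ₗ π) (by rw [comp_assoc, hπb, comp_zero])
  have hhk : h ∘ₗ k ∘ₗ d = d := by rw [hk, ← comp_assoc, hh, comp_assoc, hdπ]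
  obtain ⟨ξ, hξ⟩ := hde.exists_comp_eq_of_projective (LinearMap.id - h ∘ₗ k)
    (by rw [sub_comp, id_comp, comp_assoc, hhk, sub_self])
  exact ⟨k, ξ, by rw [hξ, sub_add_cancel],
    by rw [hk, range_comp_of_range_eq_top _ (range_eq_top.2 hπ)]⟩

end TotallyExact

end

section Splice

variable {A : Type*} [Ring A] {N M₀ M₁ M₂ M₃ P : Type*} [AddCommGroup N] [Module A N]
  [AddCommGroup M₀] [Module A M₀] [AddCommGroup M₁] [Module A M₁] [AddCommGroup M₂] [Module A M₂]
  [AddCommGroup M₃] [Module A M₃] [AddCommGroup P] [Module A P]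

variable (d₀ : M₀ →ₗ[A] M₁) (d₁ : M₁ →ₗ[A] M₂) (h : P →ₗ[A] M₀) (k : M₀ →ₗ[A] P)
  (ξ : M₁ →ₗ[A] M₀)

def spliceβ : P →ₗ[A] M₁ × P := (d₀ ∘ₗ h).prod (LinearMap.id - k ∘ₗ h)

def spliceγ : M₁ × P →ₗ[A] M₂ × M₀ :=
  (d₁ ∘ₗ fst A M₁ P).prod (h ∘ₗ snd A M₁ P - ξ ∘ₗ fst A M₁ P)

@[simp] lemma spliceβ_apply (x : P) : spliceβ d₀ h k x = (d₀ (h x), x - k (h x)) := rfl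

@[simp] lemma spliceγ_apply (z : M₁) (w : P) : spliceγ d₁ h ξ (z, w) = (d₁ z, h w - ξ z) := rfl

variable {d₀ d₁ h k ξ}

lemma comp_comp_eq_of_homotopy {c : N →ₗ[A] M₀} (hξ : ξ ∘ₗ d₀ + h ∘ₗ k = LinearMap.id)
    (hc : d₀ ∘ₗ c = 0) : h ∘ₗ k ∘ₗ c = c := by
  rw [← comp_assoc, ← sub_eq_of_eq_add' hξ.symm, sub_comp, id_comp, comp_assoc, hc, comp_zero,
    sub_zero]

theorem totallyExact_comp_spliceβ {c : N →ₗ[A] M₀} (hc : TotallyExact c d₀)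
    (hξ : ξ ∘ₗ d₀ + h ∘ₗ k = LinearMap.id) : TotallyExact (k ∘ₗ c) (spliceβ d₀ h k) where
  range_eq_ker := by
    have hhk : ∀ y, h (k (c y)) = c y :=
      LinearMap.congr_fun (comp_comp_eq_of_homotopy hξ hc.comp_eq_zero)
    have hdc : ∀ y, d₀ (c y) = 0 := LinearMap.congr_fun hc.comp_eq_zero
    ext x
    simp only [mem_range, mem_ker, spliceβ_apply, Prod.mk_eq_zero, sub_eq_zero,
      LinearMap.comp_apply]
    constructor
    · rintro ⟨y, rfl⟩
      exact ⟨by rw [hhk, hdc], by rw [hhk]⟩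
    · rintro ⟨hx₀, hx⟩
      obtain ⟨y, hy⟩ : h x ∈ range c := hc.range_eq_ker ▸ hx₀
      exact ⟨y, by rw [hy, ← hx]⟩
  exists_comp_eq φ hφ := by
    obtain ⟨δ, hδ⟩ := hc.exists_comp_eq (φ ∘ₗ k) (by rwa [comp_assoc])
    refine ⟨δ.coprod φ, LinearMap.ext fun x ↦ ?_⟩
    have hδx : δ (d₀ (h x)) = φ (k (h x)) := LinearMap.congr_fun hδ (h x)
    simp [hδx]

theorem totallyExact_spliceβ_spliceγ (hd : TotallyExact d₀ d₁)
    (hξ : ξ ∘ₗ d₀ + h ∘ₗ k = LinearMap.id) :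
    TotallyExact (spliceβ d₀ h k) (spliceγ d₁ h ξ) where
  range_eq_ker := by
    have hξy : ∀ y, ξ (d₀ y) + h (k y) = y := LinearMap.congr_fun hξ
    refine le_antisymm (range_le_ker_iff.2 (LinearMap.ext fun x ↦ ?_)) fun ⟨z, w⟩ hzw ↦ ?_
    · have hdd : d₁ (d₀ (h x)) = 0 := LinearMap.congr_fun hd.comp_eq_zero (h x)
      simp only [LinearMap.comp_apply, spliceβ_apply, spliceγ_apply, hdd, map_sub]
      rw [sub_sub, add_comm, hξy, sub_self]
      rfl
    · obtain ⟨hz, hw⟩ : d₁ z = 0 ∧ h w = ξ z := by simpa [sub_eq_zero] using hzw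
      obtain ⟨y, rfl⟩ : z ∈ range d₀ := hd.range_eq_ker ▸ hz
      have hy : h (w + k y) = y := by rw [map_add, hw, hξy]
      exact ⟨w + k y, by simp [hy]⟩
  exists_comp_eq φ hφ := by
    obtain ⟨⟨φ₁, φ₂⟩, rfl⟩ := (coprodEquiv ℕ).surjective φ
    have hφx (x : P) : φ₁ (d₀ (h x)) + φ₂ x - φ₂ (k (h x)) = 0 := by
      simpa [add_sub_assoc] using LinearMap.congr_fun hφ x
    set ψ₂ := φ₂ ∘ₗ k - φ₁ ∘ₗ d₀
    have hψ₂h (x : P) : ψ₂ (h x) = φ₂ x := by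
      simp only [ψ₂, LinearMap.sub_apply, LinearMap.comp_apply]
      linear_combination (norm := abel) -hφx x
    obtain ⟨ψ₁, hψ₁⟩ := hd.exists_comp_eq (φ₁ + ψ₂ ∘ₗ ξ) <| LinearMap.ext fun y ↦ by
      have hξy : ξ (d₀ y) = y - h (k y) := eq_sub_of_add_eq (LinearMap.congr_fun hξ y)
      simp only [LinearMap.comp_apply, LinearMap.add_apply, LinearMap.zero_apply, hξy, map_sub,
        hψ₂h]
      simp only [ψ₂, LinearMap.sub_apply, LinearMap.comp_apply]
      abel
    refine ⟨ψ₁.coprod ψ₂, LinearMap.ext fun ⟨z, w⟩ ↦ ?_⟩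
    have hz : ψ₁ (d₁ z) = φ₁ z + ψ₂ (ξ z) := LinearMap.congr_fun hψ₁ z
    simp only [LinearMap.comp_apply, spliceγ_apply, coprod_apply, map_sub, hψ₂h, hz]
    simp

theorem totallyExact_spliceγ_comp_fst {d₂ : M₂ →ₗ[A] M₃} (hd : TotallyExact d₁ d₂)
    (hξ : ξ ∘ₗ d₀ + h ∘ₗ k = LinearMap.id) (hdd : d₁ ∘ₗ d₀ = 0) :
    TotallyExact (spliceγ d₁ h ξ) (d₂ ∘ₗ fst A M₂ M₀) where
  range_eq_ker := by
    have hξy : ∀ y, ξ (d₀ y) + h (k y) = y := LinearMap.congr_fun hξ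
    refine le_antisymm (range_le_ker_iff.2 (LinearMap.ext fun ⟨z, w⟩ ↦ ?_)) fun ⟨a, b⟩ hab ↦ ?_
    · simpa using LinearMap.congr_fun hd.comp_eq_zero z
    · obtain ⟨z, rfl⟩ : a ∈ range d₁ := hd.range_eq_ker ▸ hab
      refine ⟨(z - d₀ (b + ξ z), k (b + ξ z)), ?_⟩
      have hdd' : d₁ (d₀ (b + ξ z)) = 0 := LinearMap.congr_fun hdd _
      simp only [spliceγ_apply, map_sub, hdd', sub_zero, Prod.mk.injEq, true_and]
      linear_combination (norm := abel) hξy (b + ξ z)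
  exists_comp_eq φ hφ := by
    obtain ⟨⟨φ₁, φ₂⟩, rfl⟩ := (coprodEquiv ℕ).surjective φ
    have hφ₂h (w : P) : φ₂ (h w) = 0 := by simpa using LinearMap.congr_fun hφ (0, w)
    have hφ₁ (z : M₁) : φ₁ (d₁ z) = φ₂ (ξ z) := by
      simpa [← sub_eq_add_neg, sub_eq_zero] using LinearMap.congr_fun hφ (z, 0)
    have hφ₂ : φ₂ = 0 := LinearMap.ext fun y ↦ by
      have hdy : d₁ (d₀ y) = 0 := LinearMap.congr_fun hdd y
      have hξy : ξ (d₀ y) + h (k y) = y := LinearMap.congr_fun hξ y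
      rw [← hξy, map_add, ← hφ₁, hdy, map_zero, hφ₂h, add_zero, LinearMap.zero_apply]
    obtain ⟨ψ, hψ⟩ := hd.exists_comp_eq φ₁ (LinearMap.ext fun z ↦ by simp [hφ₁, hφ₂])
    exact ⟨ψ, LinearMap.ext fun ⟨a, b⟩ ↦ by simp [← hψ, hφ₂]⟩

end Splice

theorem IsGorensteinProjective.of_linearEquiv {A : Type u} [Ring A] {M N : Type u}
    [AddCommGroup M] [Module A M] [AddCommGroup N] [Module A N] (e : M ≃ₗ[A] N)
    (hN : IsGorensteinProjective A N) : IsGorensteinProjective A M := by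
  obtain ⟨T, d, hfin, hproj, hex, hdual, ⟨e'⟩⟩ := hN
  exact ⟨T, d, hfin, hproj, hex, hdual, ⟨e.trans e'⟩⟩

section SpliceComplex

variable {A : Type u} [Ring A] {T : ℤ → ModuleCat.{u} A} {P : Type u} [AddCommGroup P] [Module A P]

-- `T` shifted by one, except in degrees `-1, 0, 1`.
variable (T P) in
def spliceObj : ℤ → ModuleCat.{u} A
  | .ofNat 0 => .of A (T 1 × P)
  | .ofNat 1 => .of A (T 2 × T 0)
  | .ofNat (n + 2) => T (n + 3)
  | .negSucc 0 => .of A P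
  | .negSucc (n + 1) => T (.negSucc n)

def spliceHom (d : ∀ n, T n ⟶ T (n + 1)) (h : P →ₗ[A] T 0) (k : T 0 →ₗ[A] P)
    (ξ : T 1 →ₗ[A] T 0) : ∀ n, spliceObj T P n ⟶ spliceObj T P (n + 1)
  | .ofNat 0 => ModuleCat.ofHom (spliceγ (d 1).hom h ξ)
  | .ofNat 1 => ModuleCat.ofHom ((d 2).hom ∘ₗ LinearMap.fst A (T 2) (T 0))
  | .ofNat (n + 2) => d (n + 3)
  | .negSucc 0 => ModuleCat.ofHom (spliceβ (d 0).hom h k)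
  | .negSucc 1 => ModuleCat.ofHom (k ∘ₗ (d (.negSucc 0)).hom)
  | .negSucc (n + 2) => d (.negSucc (n + 1))

theorem finite_spliceObj (hT : ∀ n, Module.Finite A (T n)) [Module.Finite A P] :
    ∀ n, Module.Finite A (spliceObj T P n)
  | .ofNat 0 => have := hT 1; inferInstanceAs (Module.Finite A (T 1 × P))
  | .ofNat 1 => have := hT 2; have := hT 0; inferInstanceAs (Module.Finite A (T 2 × T 0))
  | .ofNat (n + 2) => hT (n + 3)
  | .negSucc 0 => inferInstanceAs (Module.Finite A P)
  | .negSucc (n + 1) => hT (.negSucc n)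

theorem projective_spliceObj (hT : ∀ n, Module.Projective A (T n)) [Module.Projective A P] :
    ∀ n, Module.Projective A (spliceObj T P n)
  | .ofNat 0 => have := hT 1; inferInstanceAs (Module.Projective A (T 1 × P))
  | .ofNat 1 => have := hT 2; have := hT 0; inferInstanceAs (Module.Projective A (T 2 × T 0))
  | .ofNat (n + 2) => hT (n + 3)
  | .negSucc 0 => inferInstanceAs (Module.Projective A P)
  | .negSucc (n + 1) => hT (.negSucc n)

variable {d : ∀ n, T n ⟶ T (n + 1)} {h : P →ₗ[A] T 0} {k : T 0 →ₗ[A] P} {ξ : T 1 →ₗ[A] T 0}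

theorem totallyExact_spliceHom (hT : ∀ n, TotallyExact (d n).hom (d (n + 1)).hom)
    (hξ : ξ ∘ₗ (d 0).hom + h ∘ₗ k = LinearMap.id) :
    ∀ n, TotallyExact (spliceHom d h k ξ n).hom (spliceHom d h k ξ (n + 1)).hom
  | .ofNat 0 => totallyExact_spliceγ_comp_fst (hT 1) hξ (hT 0).comp_eq_zero
  | .ofNat 1 => (hT 2).comp_surjective LinearMap.fst_surjective
  | .ofNat (n + 2) => hT (n + 3)
  | .negSucc 0 => totallyExact_spliceβ_spliceγ (hT 0) hξ
  | .negSucc 1 => totallyExact_comp_spliceβ (hT (.negSucc 0)) hξ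
  | .negSucc 2 => (hT (.negSucc 1)).comp_of_retraction
      (comp_comp_eq_of_homotopy hξ (hT (.negSucc 0)).comp_eq_zero)
  | .negSucc (n + 3) => hT (.negSucc (n + 2))

theorem isGorensteinProjective_splice (hfin : ∀ n, Module.Finite A (T n))
    (hproj : ∀ n, Module.Projective A (T n)) (hT : ∀ n, TotallyExact (d n).hom (d (n + 1)).hom)
    [Module.Finite A P] [Module.Projective A P] (hξ : ξ ∘ₗ (d 0).hom + h ∘ₗ k = LinearMap.id) :
    IsGorensteinProjective A (P ⧸ range (k ∘ₗ (d (-1)).hom)) := by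
  have hC := totallyExact_spliceHom hT hξ
  refine ⟨spliceObj T P, spliceHom d h k ξ, finite_spliceObj hfin, projective_spliceObj hproj,
    fun n ↦ (hC n).range_eq_ker, fun n ↦ (hC n).exists_comp_eq, ⟨?_⟩⟩
  have hβ : range (k ∘ₗ (d (-1)).hom) = ker (spliceβ (d 0).hom h k) :=
    (hC (.negSucc 1)).range_eq_ker
  have hγ : range (spliceβ (d 0).hom h k) = ker (spliceγ (d 1).hom h ξ) :=
    (hC (.negSucc 0)).range_eq_ker
  exact (Submodule.quotEquivOfEq _ _ hβ).trans
    ((spliceβ (d 0).hom h k).quotKerEquivRange.trans (LinearEquiv.ofEq _ _ hγ))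

end SpliceComplex

theorem stmt2_general (A : Type u) [Ring A]
    (G : Type u) [AddCommGroup G] [Module A G]
    (P : Type u) [AddCommGroup P] [Module A P]
    (G' : Type u) [AddCommGroup G'] [Module A G']
    (f : G →ₗ[A] P) (g : P →ₗ[A] G')
    (hg : Function.Surjective g)
    (hexact : LinearMap.range f = LinearMap.ker g)
    (hG : IsGorensteinProjective A G)
    (happrox : IsLeftAddApprox A G P f) :
    IsGorensteinProjective A G' := by
  obtain ⟨T, d, hfin, hproj, hex, hdual, ⟨e⟩⟩ := hG
  obtain ⟨_, _, hfactor⟩ := happrox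
  have hT (n : ℤ) : TotallyExact (d n).hom (d (n + 1)).hom := ⟨hex n, hdual n⟩
  obtain ⟨h, hh⟩ := hfactor (T 0) _ _ (hfin 0) (hproj 0) ((ker (d 0).hom).subtype ∘ₗ e)
  obtain ⟨k, ξ, hξ, hk⟩ := (hT (.negSucc 1)).exists_homotopy (hT (.negSucc 0)) e f hh
  refine (isGorensteinProjective_splice hfin hproj hT hξ).of_linearEquiv ?_
  exact (g.quotKerEquivOfSurjective hg).symm.trans
    (Submodule.quotEquivOfEq _ _ (hexact.symm.trans hk.symm))

/-- Let `A` be an Artin algebra and `0 → G → P → G' → 0` an exact sequence of finitely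
generated left `A`-modules where `G` is Gorenstein-projective and `G → P` is a left
`add A`-approximation of `G`. Then `G'` is Gorenstein-projective. -/
theorem stmt2 (R₀ : Type u) [CommRing R₀] [IsArtinianRing R₀] (A : Type u) [Ring A]
    [Algebra R₀ A] [Module.Finite R₀ A]
    (G : Type u) [AddCommGroup G] [Module A G] [Module.Finite A G]
    (P : Type u) [AddCommGroup P] [Module A P] [Module.Finite A P]
    (G' : Type u) [AddCommGroup G'] [Module A G'] [Module.Finite A G']
    (f : G →ₗ[A] P) (g : P →ₗ[A] G')
    (hf : Function.Injective f) (hg : Function.Surjective g)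
    (hexact : LinearMap.range f = LinearMap.ker g)
    (hG : IsGorensteinProjective A G)
    (happrox : IsLeftAddApprox A G P f) :
    IsGorensteinProjective A G' :=
  stmt2_general A G P G' f g hg hexact hG happrox
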